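/- arXiv:1709.01639 — 3 statements merged into one kernel-verified Lean document; each statement's English description precedes it below -/
import Mathlib

section
/- Let s ∈ (0,1), set κ_s = sqrt(2/(e·s·(1-s))), and let ε satisfy 0 ≤ ε ≤ min{(e/2)·min{s,1-s}/max{s,1-s}, 1}. If ρ > 0 satisfies |log ρ| ≤ κ_s √ε, then (1-s)ρ^s + s ρ^(s-1) ≤ 1 + ε. -/
/-! With `γ = log ρ`, write `ρ ^ s = exp (s γ)` and `ρ ^ (s - 1) = exp ((s - 1) γ)` and use
`exp x ≤ 1 + x + x²` for `|x| ≤ 1`. The first-order terms `(1 - s) s γ + s (s - 1) γ` cancel, so the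
left side is at most `1 + s (1 - s) γ²`. The hypothesis on `log ρ` gives `s (1 - s) γ² ≤ 2ε / e ≤ ε`,
and the bound `ε ≤ (e / 2) · min / max` is exactly what keeps both `|s γ|` and `|(s - 1) γ|` below `1`. -/

open Real

lemma exp_le_one_add_add_sq {x : ℝ} (hx : |x| ≤ 1) : exp x ≤ 1 + x + x ^ 2 := by
  linarith [(abs_le.mp (abs_exp_sub_one_sub_id_le hx)).2]

lemma sq_le_mul_of_abs_le_sqrt_mul_sqrt {x b ε : ℝ} (hb : 0 ≤ b) (hε : 0 ≤ ε)
    (h : |x| ≤ √b * √ε) : x ^ 2 ≤ b * ε := by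
  rwa [← sqrt_mul hb, le_sqrt (abs_nonneg x) (mul_nonneg hb hε), sq_abs] at h

lemma max_mul_abs_le_one_of_mul_sq_le {s γ : ℝ} (hs : s ∈ Set.Ioo (0 : ℝ) 1)
    (h : s * (1 - s) * γ ^ 2 ≤ min s (1 - s) / max s (1 - s)) :
    max s (1 - s) * |γ| ≤ 1 := by
  obtain ⟨hs0, hs1⟩ := hs
  have hm : 0 < min s (1 - s) := lt_min hs0 (by linarith)
  have hM : 0 < max s (1 - s) := hs0.trans_le (le_max_left _ _)
  -- `s (1 - s) = min · max`, so the hypothesis says `min · max · γ² ≤ min / max`.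
  rw [← min_mul_max s (1 - s), le_div_iff₀ hM] at h
  have hsq : (max s (1 - s) * |γ|) ^ 2 ≤ 1 := by
    rw [mul_pow, sq_abs]
    nlinarith
  nlinarith [abs_nonneg γ]

lemma one_sub_mul_rpow_add_mul_rpow_sub_one_le {s ρ : ℝ} (hs0 : 0 ≤ s) (hs1 : s ≤ 1)
    (hρ : 0 < ρ) (h : max s (1 - s) * |log ρ| ≤ 1) :
    (1 - s) * ρ ^ s + s * ρ ^ (s - 1) ≤ 1 + s * (1 - s) * log ρ ^ 2 := by
  have h₁ : |s * log ρ| ≤ 1 := by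
    rw [abs_mul, abs_of_nonneg hs0]
    exact le_trans (by gcongr; exact le_max_left _ _) h
  have h₂ : |(s - 1) * log ρ| ≤ 1 := by
    rw [abs_mul, abs_sub_comm, abs_of_nonneg (by linarith : 0 ≤ 1 - s)]
    exact le_trans (by gcongr; exact le_max_right _ _) h
  rw [rpow_def_of_pos hρ, rpow_def_of_pos hρ, mul_comm (log ρ), mul_comm (log ρ)]
  have e₁ := mul_le_mul_of_nonneg_left (exp_le_one_add_add_sq h₁) (by linarith : 0 ≤ 1 - s)
  have e₂ := mul_le_mul_of_nonneg_left (exp_le_one_add_add_sq h₂) hs0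
  linear_combination e₁ + e₂

theorem denom_le_one_add_eps (s ε ρ : ℝ) (hs : s ∈ Set.Ioo (0:ℝ) 1)
    (hε0 : 0 ≤ ε)
    (hε1 : ε ≤ min ((Real.exp 1 / 2) * (min s (1 - s) / max s (1 - s))) 1)
    (hρ : 0 < ρ)
    (hlog : |Real.log ρ| ≤ Real.sqrt (2 / (Real.exp 1 * s * (1 - s))) * Real.sqrt ε) :
    (1 - s) * ρ ^ s + s * ρ ^ (s - 1) ≤ 1 + ε := by
  obtain ⟨hs0, hs1⟩ := hs
  have he : 0 < exp 1 := exp_pos 1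
  have he2 : 2 ≤ exp 1 := by linarith [add_one_le_exp 1]
  have hquad : s * (1 - s) * log ρ ^ 2 ≤ 2 / exp 1 * ε := by
    have hsq := sq_le_mul_of_abs_le_sqrt_mul_sqrt (by positivity) hε0 hlog
    have hs' : 0 < 1 - s := by linarith
    calc s * (1 - s) * log ρ ^ 2 ≤ s * (1 - s) * (2 / (exp 1 * s * (1 - s)) * ε) := by gcongr
      _ = 2 / exp 1 * ε := by field_simp
  have hsmall : 2 / exp 1 * ε ≤ min s (1 - s) / max s (1 - s) := by
    have := hε1.trans (min_le_left _ _)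
    rw [div_mul_eq_mul_div, div_le_iff₀ he]
    linarith
  have hε : 2 / exp 1 * ε ≤ ε :=
    mul_le_of_le_one_left hε0 ((div_le_one he).mpr he2)
  calc (1 - s) * ρ ^ s + s * ρ ^ (s - 1) ≤ 1 + s * (1 - s) * log ρ ^ 2 :=
        one_sub_mul_rpow_add_mul_rpow_sub_one_le hs0.le hs1.le hρ
          (max_mul_abs_le_one_of_mul_sq_le ⟨hs0, hs1⟩ (hquad.trans hsmall))
    _ ≤ 1 + ε := by linarith
end

section
/- Let s ∈ (0,1), κ_s = sqrt(2/(e·s·(1-s))), and 0 ≤ ε ≤ min{(e/2)·min{s,1-s}/max{s,1-s}, 1}. If ρ > 0 satisfies |log ρ| ≤ κ_s √ε, then g(s,ρ) := 1 - 1/((1-s)ρ^s + s ρ^(s-1)) ≤ ε. -/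
/-!
Write `t = log ρ`, so that `(1 - s) ρ ^ s + s ρ ^ (s - 1) = (1 - s) e ^ (s t) + s e ^ ((s - 1) t)`.
The smallness assumption on `ε` forces `max s (1 - s) * |t| ≤ 1`, and in that range the second-order
bound `e ^ x ≤ 1 + x + x ^ 2` applies to both exponents. The first-order terms cancel, leaving
`1 + s (1 - s) t ^ 2 ≤ 1 + (2 / e) ε ≤ 1 + ε`, and `1 - 1 / (1 + ε) ≤ ε`.
-/

open Real

lemma one_sub_mul_exp_add_mul_exp_le {s t : ℝ} (hs0 : 0 ≤ s) (hs1 : s ≤ 1)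
    (ht : max s (1 - s) * |t| ≤ 1) :
    (1 - s) * exp (s * t) + s * exp ((s - 1) * t) ≤ 1 + s * (1 - s) * t ^ 2 := by
  have hst : |s * t| ≤ 1 := by
    rw [abs_mul, abs_of_nonneg hs0]
    exact le_trans (mul_le_mul_of_nonneg_right (le_max_left _ _) (abs_nonneg t)) ht
  have hs1t : |(s - 1) * t| ≤ 1 := by
    rw [abs_mul, abs_sub_comm, abs_of_nonneg (sub_nonneg.mpr hs1)]
    exact le_trans (mul_le_mul_of_nonneg_right (le_max_right _ _) (abs_nonneg t)) ht
  calc (1 - s) * exp (s * t) + s * exp ((s - 1) * t)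
      ≤ (1 - s) * (1 + s * t + (s * t) ^ 2) + s * (1 + (s - 1) * t + ((s - 1) * t) ^ 2) := by
        gcongr
        · exact exp_le_one_add_add_sq hst
        · exact exp_le_one_add_add_sq hs1t
    _ = 1 + s * (1 - s) * t ^ 2 := by ring

lemma sq_le_mul_of_abs_le_sqrt_mul_sqrt_s3 {t a b : ℝ} (ha : 0 ≤ a) (hb : 0 ≤ b)
    (ht : |t| ≤ √a * √b) : t ^ 2 ≤ a * b := by
  simpa [sq_abs, mul_pow, sq_sqrt ha, sq_sqrt hb] using pow_le_pow_left₀ (abs_nonneg t) ht 2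

lemma max_mul_abs_le_one {a b K ε t : ℝ} (ha : 0 < a) (hb : 0 < b) (hK : 0 < K)
    (ht : t ^ 2 ≤ 2 / (K * a * b) * ε) (hε : ε ≤ K / 2 * (min a b / max a b)) :
    max a b * |t| ≤ 1 := by
  have hM : 0 < max a b := lt_max_of_lt_left ha
  have hmM : min a b * max a b = a * b := min_mul_max a b
  have hsq : (max a b * |t|) ^ 2 ≤ 1 :=
    calc (max a b * |t|) ^ 2 = max a b ^ 2 * t ^ 2 := by rw [mul_pow, sq_abs]
      _ ≤ max a b ^ 2 * (2 / (K * a * b) * (K / 2 * (min a b / max a b))) := by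
        gcongr; exact ht.trans (by gcongr)
      _ = 1 := by field_simp; linear_combination hmM
  exact (pow_le_one_iff_of_nonneg (by positivity) two_ne_zero).mp hsq

lemma one_sub_one_div_le {F ε : ℝ} (hε : 0 ≤ ε) (hF : 0 < F) (hFε : F ≤ 1 + ε) :
    1 - 1 / F ≤ ε := by
  calc 1 - 1 / F ≤ 1 - 1 / (1 + ε) := by gcongr
    _ = ε / (1 + ε) := by field_simp; ring
    _ ≤ ε := div_le_self hε (by linarith)

theorem g_le_eps (s ε ρ : ℝ) (hs : s ∈ Set.Ioo (0:ℝ) 1)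
    (hε0 : 0 ≤ ε)
    (hε1 : ε ≤ min ((Real.exp 1 / 2) * (min s (1 - s) / max s (1 - s))) 1)
    (hρ : 0 < ρ)
    (hlog : |Real.log ρ| ≤ Real.sqrt (2 / (Real.exp 1 * s * (1 - s))) * Real.sqrt ε) :
    1 - 1 / ((1 - s) * ρ ^ s + s * ρ ^ (s - 1)) ≤ ε := by
  obtain ⟨hs0, hs1⟩ := hs
  have h1s : 0 < 1 - s := sub_pos.mpr hs1
  have ht2 := sq_le_mul_of_abs_le_sqrt_mul_sqrt_s3 (by positivity) hε0 hlog
  have hmax : max s (1 - s) * |log ρ| ≤ 1 :=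
    max_mul_abs_le_one hs0 h1s (exp_pos 1) ht2 (le_trans hε1 (min_le_left _ _))
  have hvar : s * (1 - s) * log ρ ^ 2 ≤ ε := by
    have h2e : 2 / exp 1 ≤ 1 := (div_le_one (exp_pos 1)).mpr (by linarith [add_one_le_exp 1])
    calc s * (1 - s) * log ρ ^ 2 ≤ s * (1 - s) * (2 / (exp 1 * s * (1 - s)) * ε) := by gcongr
      _ = 2 / exp 1 * ε := by field_simp
      _ ≤ ε := mul_le_of_le_one_left hε0 h2e
  have hF : (1 - s) * ρ ^ s + s * ρ ^ (s - 1) ≤ 1 + ε := by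
    rw [rpow_def_of_pos hρ, rpow_def_of_pos hρ, mul_comm (log ρ), mul_comm (log ρ)]
    linarith [one_sub_mul_exp_add_mul_exp_le hs0.le hs1.le hmax]
  exact one_sub_one_div_le hε0 (by positivity) hF
end

section
/- Let s ∈ (0,1), λ > 0, and λ̃ = λ(1 + δ) with 0 ≤ δ, δ ≤ 1 (FEM eigenvalue approximation from above). Then g(s, λ̃/λ) = 1 − 1/((1-s)(1+δ)^s + s(1+δ)^{s-1}) ≤ (s(1-s)e/2)·(log(1+δ))² ≤ (s(1-s)e/2)·δ². -/
/-! With `γ = log (1 + δ)` the denominator is `(1 - s) e^{sγ} + s e^{(s-1)γ}`. The second-order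
bound `|e^x - 1 - x| ≤ x²` for `|x| ≤ 1` makes the linear terms cancel and leaves at most
`1 + s(1-s)γ²`, and `1 - 1/D ≤ D - 1` for `D > 0`. Finally `2 ≤ e` and `0 ≤ log (1 + δ) ≤ δ`. -/

open Real

lemma one_sub_one_div_le_sub_one {D : ℝ} (hD : 0 < D) : 1 - 1 / D ≤ D - 1 := by
  have h : D - 1 - (1 - 1 / D) = (D - 1) ^ 2 / D := by field_simp
  linarith [div_nonneg (sq_nonneg (D - 1)) hD.le]

lemma exp_combination_sub_one_le {s γ : ℝ} (hs0 : 0 ≤ s) (hs1 : s ≤ 1) (hγ : |γ| ≤ 1) :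
    (1 - s) * exp (s * γ) + s * exp ((s - 1) * γ) - 1 ≤ s * (1 - s) * γ ^ 2 := by
  have abs_scaled_le {t : ℝ} (ht : |t| ≤ 1) : |t * γ| ≤ 1 := by
    rw [abs_mul]; nlinarith [abs_nonneg t, abs_nonneg γ]
  have hs : |s| ≤ 1 := abs_le.mpr ⟨by linarith, hs1⟩
  have hs' : |s - 1| ≤ 1 := abs_le.mpr ⟨by linarith, by linarith⟩
  have e₁ := (abs_le.mp (abs_exp_sub_one_sub_id_le (abs_scaled_le hs))).2
  have e₂ := (abs_le.mp (abs_exp_sub_one_sub_id_le (abs_scaled_le hs'))).2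
  -- the first-order terms cancel: `(1 - s) s γ + s (s - 1) γ = 0`
  have hsum : (1 - s) * (s * γ) ^ 2 + s * ((s - 1) * γ) ^ 2 = s * (1 - s) * γ ^ 2 := by ring
  nlinarith [mul_le_mul_of_nonneg_left e₁ (by linarith : (0 : ℝ) ≤ 1 - s),
    mul_le_mul_of_nonneg_left e₂ hs0]

lemma one_sub_one_div_rpow_combination_le {s x : ℝ} (hs0 : 0 ≤ s) (hs1 : s ≤ 1) (hx : 0 < x)
    (hlog : |log x| ≤ 1) :
    1 - 1 / ((1 - s) * x ^ s + s * x ^ (s - 1)) ≤ s * (1 - s) * log x ^ 2 := by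
  rw [rpow_def_of_pos hx, rpow_def_of_pos hx, mul_comm (log x), mul_comm (log x)]
  have hD : 0 < (1 - s) * exp (s * log x) + s * exp ((s - 1) * log x) := by
    rcases hs0.eq_or_lt with rfl | hs0
    · simp
    · have := exp_pos (s * log x)
      nlinarith [exp_pos ((s - 1) * log x)]
  exact (one_sub_one_div_le_sub_one hD).trans (exp_combination_sub_one_le hs0 hs1 hlog)

theorem fem_g_bound (s lam lamt δ : ℝ) (hs : s ∈ Set.Ioo (0:ℝ) 1)
    (hl : 0 < lam) (hδ0 : 0 ≤ δ) (hδ1 : δ ≤ 1) (hlamt : lamt = lam * (1 + δ)) :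
    1 - 1 / ((1 - s) * (lamt / lam) ^ s + s * (lamt / lam) ^ (s - 1))
        ≤ (s * (1 - s) * Real.exp 1 / 2) * (Real.log (1 + δ)) ^ 2 ∧
    (s * (1 - s) * Real.exp 1 / 2) * (Real.log (1 + δ)) ^ 2
        ≤ (s * (1 - s) * Real.exp 1 / 2) * δ ^ 2 := by
  obtain ⟨hs0, hs1⟩ := hs
  have hratio : lamt / lam = 1 + δ := by rw [hlamt]; field_simp
  have hlog0 : 0 ≤ log (1 + δ) := log_nonneg (by linarith)
  have hlogδ : log (1 + δ) ≤ δ := by linarith [log_le_sub_one_of_pos (by linarith : 0 < 1 + δ)]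
  have hcoef : s * (1 - s) ≤ s * (1 - s) * exp 1 / 2 := by
    nlinarith [add_one_le_exp 1, mul_pos hs0 (sub_pos.mpr hs1)]
  refine ⟨?_, mul_le_mul_of_nonneg_left (pow_le_pow_left₀ hlog0 hlogδ 2)
    ((mul_pos hs0 (sub_pos.mpr hs1)).le.trans hcoef)⟩
  rw [hratio]
  calc 1 - 1 / ((1 - s) * (1 + δ) ^ s + s * (1 + δ) ^ (s - 1))
      ≤ s * (1 - s) * log (1 + δ) ^ 2 :=
        one_sub_one_div_rpow_combination_le hs0.le hs1.le (by linarith)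
          (abs_le.mpr ⟨by linarith, by linarith⟩)
    _ ≤ s * (1 - s) * exp 1 / 2 * log (1 + δ) ^ 2 :=
        mul_le_mul_of_nonneg_right hcoef (sq_nonneg _)
end
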